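/- arXiv:1711.08306 — 2 statements merged into one kernel-verified Lean document; each statement's English description precedes it below -/
import Mathlib

section
/- Let p be a prime, g a primitive root mod p, and let K' be the (p-1)×(p-1) left-circulant matrix with first row (K(1), K(g), K(g^2), ..., K(g^{p-2})), where K is the Kloosterman sum over F_p. Then |det K'| = p^{p-2}. -/
/-!
Along the cyclic group `(ZMod p)ˣ = ⟨g⟩` the matrix `A` is a Hankel matrix, so
`(A * A) s t = ∑ u, K (g^s u) K (g^t u)`. Opening both Kloosterman sums and summing the additive
character over `u` first, only the pairs `(x, y)` with `g^s / x + g^t / y = 0` survive; this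
evaluates the correlation to `p² - p - 1` if `s = t` and to `-p - 1` otherwise. Thus
`A * A = p² • 1 - (p + 1) • J` with `J` the all-ones matrix, a rank-one perturbation of a scalar
matrix, of determinant `p^(2(p-2))`; hence `‖det A‖² = p^(2(p-2))`.
-/

/-- The Kloosterman sum over the prime field `F_p`. -/
noncomputable def kloosterman (p : ℕ) [Fact p.Prime] (u : ZMod p) : ℂ :=
  ∑ x ∈ (Finset.univ \ {0} : Finset (ZMod p)),
    Complex.exp (2 * Real.pi * Complex.I * ((x + u * x⁻¹).val : ℂ) / p)

open Finset Matrix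

theorem Fintype.sum_units_eq_sum_sdiff_zero {G₀ M : Type*} [GroupWithZero G₀] [Fintype G₀]
    [DecidableEq G₀] [AddCommMonoid M] (f : G₀ → M) :
    ∑ u : G₀ˣ, f u = ∑ x ∈ univ \ {0}, f x := by
  refine Finset.sum_bij' (fun u _ => (u : G₀)) (fun x hx => Units.mk0 x (by simpa using hx))
    ?_ ?_ ?_ ?_ ?_ <;> simp

theorem Units.mul_inv_add_mul_inv_eq_zero_iff {F : Type*} [Field F] (a b x y : Fˣ) :
    (a : F) * (x : F)⁻¹ + b * (y : F)⁻¹ = 0 ↔ y = -(b * a⁻¹ * x) := by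
  rw [Units.ext_iff]
  push_cast
  have := x.ne_zero; have := y.ne_zero; have := a.ne_zero
  field_simp
  constructor <;> intro h <;> linear_combination h

namespace AddChar

variable {F R : Type*} [Field F] [Fintype F] [DecidableEq F] [CommRing R] [IsDomain R]
  {ψ : AddChar F R}

def kloostermanSum (ψ : AddChar F R) (a : F) : R :=
  ∑ x : Fˣ, ψ (x + a * (x : F)⁻¹)

theorem sum_units_mulShift (hψ : ψ.IsPrimitive) (t : F) :
    ∑ u : Fˣ, ψ (u * t) = (if t = 0 then (Fintype.card F : R) else 0) - 1 := by
  rw [Fintype.sum_units_eq_sum_sdiff_zero (fun x => ψ (x * t)), sum_sdiff_eq_sub (subset_univ _),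
    sum_mulShift t hψ]
  simp

theorem sum_units_eq_neg_one (hψ : ψ.IsPrimitive) : ∑ u : Fˣ, ψ u = -1 := by
  simpa using sum_units_mulShift hψ 1

theorem sum_kloostermanSum_mul_kloostermanSum (hψ : ψ.IsPrimitive) (a b : Fˣ) :
    ∑ u : Fˣ, kloostermanSum ψ (a * u) * kloostermanSum ψ (b * u) =
      Fintype.card F * ((if a = b then (Fintype.card F : R) else 0) - 1) - 1 := by
  set q : R := (Fintype.card F : R)
  have expand : ∀ u : Fˣ, kloostermanSum ψ (a * u) * kloostermanSum ψ (b * u) =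
      ∑ x : Fˣ, ∑ y : Fˣ, ψ (x + y) * ψ (u * (a * (x : F)⁻¹ + b * (y : F)⁻¹)) := by
    intro u
    simp_rw [kloostermanSum, sum_mul_sum, ← map_add_eq_mul]
    refine sum_congr rfl fun x _ => sum_congr rfl fun y _ => congrArg ψ ?_
    ring
  have collapse : ∀ x : Fˣ, ∑ y : Fˣ,
      (if (a : F) * (x : F)⁻¹ + b * (y : F)⁻¹ = 0 then ψ (x + y) else 0) =
        ψ (x * (1 - b * a⁻¹)) := by
    intro x
    simp_rw [Units.mul_inv_add_mul_inv_eq_zero_iff, sum_ite_eq', mem_univ, if_true]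
    congr 1
    push_cast
    ring
  calc ∑ u : Fˣ, kloostermanSum ψ (a * u) * kloostermanSum ψ (b * u)
      = ∑ x : Fˣ, ∑ y : Fˣ, ψ (x + y) *
          ((if (a : F) * (x : F)⁻¹ + b * (y : F)⁻¹ = 0 then q else 0) - 1) := by
        rw [sum_congr rfl fun u _ => expand u, sum_comm]
        refine sum_congr rfl fun x _ => ?_
        rw [sum_comm]
        refine sum_congr rfl fun y _ => ?_
        rw [← mul_sum, sum_units_mulShift hψ]
    _ = q * ∑ x : Fˣ, ψ (x * (1 - b * a⁻¹)) - (∑ x : Fˣ, ψ x) * ∑ y : Fˣ, ψ y := by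
        rw [sum_mul_sum, mul_sum, ← sum_sub_distrib]
        refine sum_congr rfl fun x _ => ?_
        rw [← collapse x, mul_sum, ← sum_sub_distrib]
        refine sum_congr rfl fun y _ => ?_
        rw [map_add_eq_mul]
        split_ifs <;> ring
    _ = q * ((if a = b then q else 0) - 1) - 1 := by
        have hab : (1 : F) - b * a⁻¹ = 0 ↔ a = b := by
          rw [sub_eq_zero, eq_comm, ← Units.val_mul, Units.val_eq_one, mul_inv_eq_one, eq_comm]
        rw [sum_units_mulShift hψ, sum_units_eq_neg_one hψ, if_congr hab rfl rfl]
        ring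

end AddChar

theorem kloosterman_eq_kloostermanSum (p : ℕ) [Fact p.Prime] (u : ZMod p) :
    kloosterman p u = AddChar.kloostermanSum (ZMod.stdAddChar (N := p)) u := by
  rw [AddChar.kloostermanSum,
    Fintype.sum_units_eq_sum_sdiff_zero fun x => ZMod.stdAddChar (x + u * x⁻¹)]
  refine sum_congr rfl fun x _ => ?_
  rw [ZMod.stdAddChar_apply, ZMod.toCircle_apply]

section Cyclic

variable {G R : Type*} [Group G] [Fintype G] {g : G} {n : ℕ}

theorem bijective_pow_fin (hg : orderOf g = n) (hG : Fintype.card G = n) :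
    Function.Bijective fun j : Fin n => g ^ (j : ℕ) := by
  rw [Fintype.bijective_iff_injective_and_card, Fintype.card_fin, hG]
  refine ⟨fun i j hij => Fin.ext (pow_injOn_Iio_orderOf ?_ ?_ hij), rfl⟩ <;> simp [hg]

theorem Matrix.of_pow_add_mul_self [CommSemiring R] (hg : orderOf g = n)
    (hG : Fintype.card G = n) (f : G → R) :
    (of fun s l : Fin n => f (g ^ (s + l : ℕ))) * (of fun s l : Fin n => f (g ^ (s + l : ℕ))) =
      of fun s t : Fin n => ∑ u, f (g ^ (s : ℕ) * u) * f (g ^ (t : ℕ) * u) := by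
  ext s t
  rw [mul_apply, of_apply, ← Fintype.sum_bijective _ (bijective_pow_fin hg hG) _ _ fun j => rfl]
  simp only [of_apply, pow_add, (Commute.pow_pow_self g _ _).eq]

end Cyclic

theorem Matrix.det_smul_one_add_smul_of_const {K ι : Type*} [Field K] [Fintype ι] [DecidableEq ι]
    [Nonempty ι] {a : K} (ha : a ≠ 0) (b : K) :
    det (a • (1 : Matrix ι ι K) + b • of fun _ _ => 1) =
      a ^ (Fintype.card ι - 1) * (a + Fintype.card ι * b) := by
  have hrank_one : a • (1 : Matrix ι ι K) + b • of (fun _ _ => 1) =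
      a • (1 + replicateCol Unit (fun _ : ι => b / a) * replicateRow Unit fun _ : ι => (1 : K)) := by
    ext i j
    simp only [add_apply, smul_apply, one_apply, of_apply, mul_apply, replicateCol_apply,
      replicateRow_apply, Finset.univ_unique, sum_singleton, smul_eq_mul]
    split_ifs <;> field_simp
  obtain ⟨m, hm⟩ : ∃ m, Fintype.card ι = m + 1 := Nat.exists_eq_succ_of_ne_zero Fintype.card_ne_zero
  rw [hrank_one, det_smul, det_one_add_replicateCol_mul_replicateRow, hm]
  simp only [pow_succ, dotProduct, one_mul, sum_const, card_univ, hm, nsmul_eq_mul, Nat.cast_add,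
    Nat.cast_one, add_tsub_cancel_right]
  field_simp

theorem abs_det_kloosterman_circulant (p : ℕ) [Fact p.Prime] (g : (ZMod p)ˣ)
    (hg : orderOf g = p - 1) :
    ‖Matrix.det (Matrix.of fun s l : Fin (p - 1) =>
      kloosterman p ((g : ZMod p) ^ ((s.val + l.val) % (p - 1))))‖ = (p : ℝ) ^ (p - 2) := by
  set A := of fun s l : Fin (p - 1) => kloosterman p ((g : ZMod p) ^ ((s.val + l.val) % (p - 1)))
  have hp2 := (Fact.out : p.Prime).two_le
  have : NeZero (p - 1) := ⟨by omega⟩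
  have hA : A = of fun s l : Fin (p - 1) => kloosterman p ↑(g ^ (s + l : ℕ)) := by
    have hmod (k : ℕ) : g ^ (k % (p - 1)) = g ^ k := by rw [← hg, pow_mod_orderOf]
    ext s l
    simp only [A, of_apply, ← Units.val_pow_eq_pow_val, hmod]
  have hAA : A * A = ((p : ℂ) ^ 2) • 1 + (-(p + 1 : ℂ)) • of fun _ _ => 1 := by
    rw [hA, of_pow_add_mul_self hg (ZMod.card_units p) fun u => kloosterman p u]
    ext s t
    simp only [of_apply, Units.val_mul, kloosterman_eq_kloostermanSum,
      AddChar.sum_kloostermanSum_mul_kloostermanSum (ZMod.isPrimitive_stdAddChar p),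
      (bijective_pow_fin hg (ZMod.card_units p)).injective.eq_iff, ZMod.card, Matrix.add_apply,
      Matrix.smul_apply, one_apply, smul_eq_mul]
    split_ifs <;> ring
  have hdet : det (A * A) = ((p : ℂ) ^ 2) ^ (p - 2) := by
    rw [hAA, det_smul_one_add_smul_of_const (by simp [(Fact.out : p.Prime).ne_zero]),
      Fintype.card_fin, Nat.cast_sub (by omega), Nat.sub_sub]
    ring
  have hsq : ‖det A‖ ^ 2 = ((p : ℝ) ^ (p - 2)) ^ 2 := by
    rw [sq, ← norm_mul, ← det_mul, hdet, norm_pow, norm_pow, Complex.norm_natCast, ← pow_mul,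
      ← pow_mul, mul_comm]
  exact (pow_left_inj₀ (norm_nonneg _) (by positivity) two_ne_zero).mp hsq
end

section
/- For a finite field F_{p^m} and each fixed nonzero s in F_p, the ratio T_{1s}/p^m tends to 1/p^2 as m → ∞. -/
/-!
Write `q = p^m`, `ψ` for a nontrivial additive character of `𝔽_p` and
`K(a, b) = ∑_{x ∈ 𝔽_q^*} ψ(tr(a x + b x⁻¹))` for the Kloosterman sum. Orthogonality of `ψ` gives
`p² T = ∑_{a, b ∈ 𝔽_p} ψ(-(a + b s)) K(a, b)`, where the term `(a, b) = (0, 0)` is `q - 1`.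

Instead of the Weil bound, every other term is controlled by an elementary fourth moment:
`∑_{a, b ∈ 𝔽_q} |K(a, b)|⁴ = q² · #{(x, y, z, w) ∈ (𝔽_q^*)⁴ | x - y = z - w, x⁻¹ - y⁻¹ = z⁻¹ - w⁻¹}`,
and that system says `x + w = z + y`, `x⁻¹ + w⁻¹ = z⁻¹ + y⁻¹`: either both sums vanish, or the pairs
`x, w` and `z, y` have equal sums and products, so the count is at most `3 (q - 1)²`.
Since `K(a c, b c⁻¹) = K(a, b)`, for `a ≠ 0` the value `|K(a, b)|⁴` occurs `q - 1` times in the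
moment, whence `|K(a, b)|⁴ ≤ 3 q³`. Thus `|p² T - q| = O(p² q^{3/4})`, and `T / q → 1 / p²`.
-/

open Finset

theorem AddChar.norm_sum_sq_eq_sum_sub {G ι : Type*} [AddCommGroup G] [Finite G] [Fintype ι]
    (ψ : AddChar G ℂ) (w : ι → G) :
    ((‖∑ i, ψ (w i)‖ ^ 2 : ℝ) : ℂ) = ∑ ij : ι × ι, ψ (w ij.1 - w ij.2) := by
  rw [Complex.ofReal_pow, ← Complex.mul_conj', map_sum, Fintype.sum_mul_sum,
    ← Fintype.sum_prod_type']
  simp only [← AddChar.map_neg_eq_conj, ← AddChar.map_add_eq_mul, sub_eq_add_neg]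

theorem AddChar.sum_sum_sum_mul_eq_card_sq_mul {F ι : Type*} [Field F] [Fintype F]
    [DecidableEq F] [Fintype ι] {ψ : AddChar F ℂ} (hψ : ψ ≠ 1) (U V : ι → F) :
    ∑ a, ∑ b, ∑ i, ψ (a * U i) * ψ (b * V i) =
      (Fintype.card F : ℂ) ^ 2 * #{i | U i = 0 ∧ V i = 0} := by
  have hprim := AddChar.IsPrimitive.of_ne_one hψ
  calc ∑ a, ∑ b, ∑ i, ψ (a * U i) * ψ (b * V i)
      = ∑ i, (∑ a, ψ (a * U i)) * ∑ b, ψ (b * V i) := by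
        simp only [Fintype.sum_mul_sum]
        symm
        rw [Finset.sum_comm]
        exact Finset.sum_congr rfl fun _ _ => by rw [Finset.sum_comm]
    _ = _ := by
        simp only [AddChar.sum_mulShift _ hprim, Nat.cast_ite, Nat.cast_zero,
          ite_zero_mul_ite_zero]
        rw [← Finset.sum_filter, Finset.sum_const, nsmul_eq_mul, sq, mul_comm]

theorem AddChar.sum_sum_norm_sum_sq {F ι : Type*} [Field F] [Fintype F] [DecidableEq F]
    [Fintype ι] {ψ : AddChar F ℂ} (hψ : ψ ≠ 1) (u v : ι → F) :
    ∑ a, ∑ b, ‖∑ i, ψ (a * u i + b * v i)‖ ^ 2 =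
      (Fintype.card F : ℝ) ^ 2 * #{ij : ι × ι | u ij.1 = u ij.2 ∧ v ij.1 = v ij.2} := by
  apply Complex.ofReal_injective
  simp only [Complex.ofReal_sum, Complex.ofReal_mul, Complex.ofReal_pow, Complex.ofReal_natCast]
  simp only [← Complex.ofReal_pow, AddChar.norm_sum_sq_eq_sum_sub]
  have hsplit : ∀ (a b : F) (ij : ι × ι),
      ψ (a * u ij.1 + b * v ij.1 - (a * u ij.2 + b * v ij.2)) =
        ψ (a * (u ij.1 - u ij.2)) * ψ (b * (v ij.1 - v ij.2)) := fun a b ij => by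
    rw [← AddChar.map_add_eq_mul]; ring_nf
  simp only [hsplit, AddChar.sum_sum_sum_mul_eq_card_sq_mul hψ, sub_eq_zero]

theorem eq_and_eq_or_eq_and_eq_or_eq_neg_of_sub_eq_sub {F : Type*} [Field F] {x y z w : F}
    (hx : x ≠ 0) (hy : y ≠ 0) (hz : z ≠ 0) (hw : w ≠ 0)
    (h : x - y = z - w) (hinv : x⁻¹ - y⁻¹ = z⁻¹ - w⁻¹) :
    (x = z ∧ y = w) ∨ (x = y ∧ z = w) ∨ (z = -y ∧ w = -x) := by
  by_cases hxw : x + w = 0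
  · exact Or.inr (Or.inr ⟨by linear_combination hxw - h, by linear_combination hxw⟩)
  · -- `x, w` and `z, y` have the same sum and, by `hinv`, the same product
    have hprod : x * w = z * y := by
      field_simp at hinv
      have : (x + w) * (z * y - x * w) = 0 := by linear_combination hinv - x * w * h
      exact (sub_eq_zero.1 ((mul_eq_zero.1 this).resolve_left hxw)).symm
    have key : (x - z) * (x - y) = 0 := by linear_combination x * h - hprod
    rcases mul_eq_zero.1 key with hxz | hxy
    · exact Or.inl ⟨by linear_combination hxz, by linear_combination hxz - h⟩
    · exact Or.inr (Or.inl ⟨by linear_combination hxy, by linear_combination hxy - h⟩)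

section Kloosterman

variable {F : Type*} [Field F] [Fintype F] [DecidableEq F]

noncomputable def kloostermanSum (ψ : AddChar F ℂ) (a b : F) : ℂ :=
  ∑ x : Fˣ, ψ (a * x + b * (x : F)⁻¹)

variable (ψ : AddChar F ℂ)

theorem kloostermanSum_zero_zero : kloostermanSum ψ 0 0 = Fintype.card Fˣ := by
  simp [kloostermanSum]

theorem kloostermanSum_comm (a b : F) : kloostermanSum ψ a b = kloostermanSum ψ b a :=
  Fintype.sum_equiv (Equiv.inv Fˣ) _ _ fun x => by simp [add_comm]

theorem kloostermanSum_mul_mul_inv (a b : F) (c : Fˣ) :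
    kloostermanSum ψ (a * c) (b * (c : F)⁻¹) = kloostermanSum ψ a b :=
  Fintype.sum_equiv (Equiv.mulLeft c) _ _ fun x => by
    simp only [Equiv.coe_mulLeft, Units.val_mul, mul_inv_rev]; ring_nf

theorem card_filter_sub_eq_sub_and_inv_sub_eq_inv_sub :
    #{PQ : (Fˣ × Fˣ) × (Fˣ × Fˣ) | (PQ.1.1 : F) - PQ.1.2 = PQ.2.1 - PQ.2.2 ∧
      (PQ.1.1 : F)⁻¹ - (PQ.1.2 : F)⁻¹ = (PQ.2.1 : F)⁻¹ - (PQ.2.2 : F)⁻¹} ≤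
      3 * Fintype.card Fˣ ^ 2 := by
  have hsub : ({PQ : (Fˣ × Fˣ) × (Fˣ × Fˣ) | (PQ.1.1 : F) - PQ.1.2 = PQ.2.1 - PQ.2.2 ∧
      (PQ.1.1 : F)⁻¹ - (PQ.1.2 : F)⁻¹ = (PQ.2.1 : F)⁻¹ - (PQ.2.2 : F)⁻¹} : Finset _) ⊆
      univ.image (fun P : Fˣ × Fˣ => (P, P)) ∪
        univ.image (fun P : Fˣ × Fˣ => ((P.1, P.1), (P.2, P.2))) ∪
        univ.image (fun P : Fˣ × Fˣ => (P, (-P.2, -P.1))) := by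
    rintro ⟨⟨x, y⟩, ⟨z, w⟩⟩ hPQ
    simp only [mem_filter, mem_univ, true_and] at hPQ
    rcases eq_and_eq_or_eq_and_eq_or_eq_neg_of_sub_eq_sub x.ne_zero y.ne_zero z.ne_zero
      w.ne_zero hPQ.1 hPQ.2 with ⟨hxz, hyw⟩ | ⟨hxy, hzw⟩ | ⟨hz, hw⟩
    · simp [Units.val_inj.1 hxz, Units.val_inj.1 hyw]
    · simp [Units.val_inj.1 hxy, Units.val_inj.1 hzw]
    · simp [← Units.val_inj, hz, hw]
  calc _ ≤ _ := card_le_card hsub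
    _ ≤ Fintype.card (Fˣ × Fˣ) + Fintype.card (Fˣ × Fˣ) + Fintype.card (Fˣ × Fˣ) :=
      (card_union_le _ _).trans (add_le_add ((card_union_le _ _).trans
        (add_le_add card_image_le card_image_le)) card_image_le)
    _ = 3 * Fintype.card Fˣ ^ 2 := by rw [Fintype.card_prod]; ring

theorem sum_sum_norm_kloostermanSum_pow_four_le {ψ : AddChar F ℂ} (hψ : ψ ≠ 1) :
    ∑ a, ∑ b, ‖kloostermanSum ψ a b‖ ^ 4 ≤
      3 * (Fintype.card F : ℝ) ^ 2 * Fintype.card Fˣ ^ 2 := by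
  have hsq : ∀ a b : F, ‖kloostermanSum ψ a b‖ ^ 4 = ‖∑ xy : Fˣ × Fˣ,
      ψ (a * ((xy.1 : F) - xy.2) + b * ((xy.1 : F)⁻¹ - (xy.2 : F)⁻¹))‖ ^ 2 := fun a b => by
    rw [show ‖kloostermanSum ψ a b‖ ^ 4 = ‖((‖kloostermanSum ψ a b‖ ^ 2 : ℝ) : ℂ)‖ ^ 2 by
      rw [Complex.norm_real, Real.norm_of_nonneg (by positivity)]; ring,
      kloostermanSum, AddChar.norm_sum_sq_eq_sum_sub]
    exact congr_arg (‖·‖ ^ 2) (sum_congr rfl fun xy _ => congr_arg ψ (by ring))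
  simp only [hsq, AddChar.sum_sum_norm_sum_sq hψ]
  have hcard : (#{PQ : (Fˣ × Fˣ) × (Fˣ × Fˣ) | (PQ.1.1 : F) - PQ.1.2 = PQ.2.1 - PQ.2.2 ∧
      (PQ.1.1 : F)⁻¹ - (PQ.1.2 : F)⁻¹ = (PQ.2.1 : F)⁻¹ - (PQ.2.2 : F)⁻¹} : ℝ) ≤
      3 * Fintype.card Fˣ ^ 2 := by
    have h := card_filter_sub_eq_sub_and_inv_sub_eq_inv_sub (F := F)
    exact_mod_cast h
  calc _ ≤ (Fintype.card F : ℝ) ^ 2 * (3 * Fintype.card Fˣ ^ 2) := by gcongr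
    _ = _ := by ring

theorem card_units_mul_norm_kloostermanSum_pow_four_le {a : F} (ha : a ≠ 0) (b : F) :
    Fintype.card Fˣ * ‖kloostermanSum ψ a b‖ ^ 4 ≤ ∑ a', ∑ b', ‖kloostermanSum ψ a' b'‖ ^ 4 := by
  let orbit : Fˣ ↪ F × F := ⟨fun c => (a * c, b * (c : F)⁻¹), fun c d hcd =>
    Units.val_injective (mul_left_cancel₀ ha (congr_arg Prod.fst hcd))⟩
  calc Fintype.card Fˣ * ‖kloostermanSum ψ a b‖ ^ 4
      = ∑ c : Fˣ, ‖kloostermanSum ψ (a * c) (b * (c : F)⁻¹)‖ ^ 4 := by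
        simp only [kloostermanSum_mul_mul_inv, sum_const, card_univ, nsmul_eq_mul]
    _ = ∑ z ∈ univ.map orbit, ‖kloostermanSum ψ z.1 z.2‖ ^ 4 :=
        (sum_map univ orbit fun z => ‖kloostermanSum ψ z.1 z.2‖ ^ 4).symm
    _ ≤ ∑ z : F × F, ‖kloostermanSum ψ z.1 z.2‖ ^ 4 :=
        sum_le_univ_sum_of_nonneg fun _ => by positivity
    _ = _ := Fintype.sum_prod_type' fun a' b' => ‖kloostermanSum ψ a' b'‖ ^ 4

theorem norm_kloostermanSum_pow_four_le {ψ : AddChar F ℂ} (hψ : ψ ≠ 1) {a b : F}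
    (hab : a ≠ 0 ∨ b ≠ 0) : ‖kloostermanSum ψ a b‖ ^ 4 ≤ 3 * (Fintype.card F : ℝ) ^ 3 := by
  wlog ha : a ≠ 0 generalizing a b
  · rw [kloostermanSum_comm]
    exact this hab.symm (hab.resolve_left ha)
  have hmoment := (card_units_mul_norm_kloostermanSum_pow_four_le ψ ha b).trans
    (sum_sum_norm_kloostermanSum_pow_four_le hψ)
  have hunits : (Fintype.card Fˣ : ℝ) = Fintype.card F - 1 := by
    rw [Fintype.card_units, Nat.cast_sub Fintype.card_pos, Nat.cast_one]
  have hpos : (0 : ℝ) < Fintype.card Fˣ := by exact_mod_cast Fintype.card_pos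
  have hle : ‖kloostermanSum ψ a b‖ ^ 4 ≤ 3 * (Fintype.card F : ℝ) ^ 2 * Fintype.card Fˣ := by
    nlinarith
  nlinarith

theorem norm_kloostermanSum_le {ψ : AddChar F ℂ} (hψ : ψ ≠ 1) {a b : F} (hab : a ≠ 0 ∨ b ≠ 0) :
    ‖kloostermanSum ψ a b‖ ≤ 2 * (Fintype.card F : ℝ) ^ (3 / 4 : ℝ) := by
  refine (pow_le_pow_iff_left₀ (norm_nonneg _) (by positivity) four_ne_zero).1 ?_
  calc ‖kloostermanSum ψ a b‖ ^ 4 ≤ 3 * (Fintype.card F : ℝ) ^ 3 :=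
        norm_kloostermanSum_pow_four_le hψ hab
    _ ≤ 2 ^ 4 * (Fintype.card F : ℝ) ^ 3 := by gcongr; norm_num
    _ = (2 * (Fintype.card F : ℝ) ^ (3 / 4 : ℝ)) ^ 4 := by
        rw [mul_pow, ← Real.rpow_natCast ((Fintype.card F : ℝ) ^ (3 / 4 : ℝ)) 4,
          ← Real.rpow_mul (by positivity)]
        norm_num

end Kloosterman

theorem AddChar.compAddMonoidHom_trace_ne_one {K F : Type*} [Field K] [Fintype K] [Field F]
    [Fintype F] [Algebra K F] {ψ : AddChar K ℂ} (hψ : ψ ≠ 1) :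
    ψ.compAddMonoidHom (Algebra.trace K F).toAddMonoidHom ≠ 1 := by
  obtain ⟨c, hc⟩ := AddChar.ne_one_iff.1 hψ
  obtain ⟨x, rfl⟩ := Algebra.trace_surjective K F c
  exact AddChar.ne_one_iff.2 ⟨x, hc⟩

section TraceCotrace

variable {K F : Type*} [Field K] [Fintype K] [DecidableEq K] [Field F] [Fintype F]
  [DecidableEq F] [Algebra K F]

theorem sq_card_mul_card_filter_trace_eq_sum {ψ : AddChar K ℂ} (hψ : ψ ≠ 1) (t s : K) :
    (Fintype.card K : ℂ) ^ 2 *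
        #{x : Fˣ | Algebra.trace K F x = t ∧ Algebra.trace K F (x : F)⁻¹ = s} =
      ∑ a : K, ∑ b : K, ψ (-(a * t + b * s)) *
        kloostermanSum (ψ.compAddMonoidHom (Algebra.trace K F).toAddMonoidHom)
          (algebraMap K F a) (algebraMap K F b) := by
  have htrace : ∀ (a : K) (y : F), Algebra.trace K F (algebraMap K F a * y) =
      a * Algebra.trace K F y := fun a y => by
    rw [← Algebra.smul_def, map_smul, smul_eq_mul]
  have hterm : ∀ (a b : K) (x : Fˣ), ψ (-(a * t + b * s)) *
      ψ.compAddMonoidHom (Algebra.trace K F).toAddMonoidHom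
        (algebraMap K F a * x + algebraMap K F b * (x : F)⁻¹) =
      ψ (a * (Algebra.trace K F x - t)) * ψ (b * (Algebra.trace K F (x : F)⁻¹ - s)) :=
    fun a b x => by
    simp only [AddChar.compAddMonoidHom_apply, LinearMap.toAddMonoidHom_coe, map_add, htrace,
      ← AddChar.map_add_eq_mul]
    ring_nf
  simp only [kloostermanSum, mul_sum, hterm, AddChar.sum_sum_sum_mul_eq_card_sq_mul hψ,
    sub_eq_zero]

theorem norm_sq_card_mul_card_filter_trace_sub_card_units_le (t s : K) :
    ‖(Fintype.card K : ℂ) ^ 2 *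
        #{x : Fˣ | Algebra.trace K F x = t ∧ Algebra.trace K F (x : F)⁻¹ = s} -
      Fintype.card Fˣ‖ ≤
      ((Fintype.card K : ℝ) ^ 2 - 1) * (2 * (Fintype.card F : ℝ) ^ (3 / 4 : ℝ)) := by
  obtain ⟨ψ, hψ1⟩ := AddChar.exists_apply_ne_zero.2 (one_ne_zero : (1 : K) ≠ 0)
  have hψ : ψ ≠ 1 := fun h => hψ1 (by rw [h, AddChar.one_apply])
  set f : K × K → ℂ := fun z => ψ (-(z.1 * t + z.2 * s)) *
    kloostermanSum (ψ.compAddMonoidHom (Algebra.trace K F).toAddMonoidHom)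
      (algebraMap K F z.1) (algebraMap K F z.2)
  have hf0 : f 0 = Fintype.card Fˣ := by simp [f, kloostermanSum_zero_zero]
  have hf : ∀ z ∈ univ.erase (0 : K × K), ‖f z‖ ≤ 2 * (Fintype.card F : ℝ) ^ (3 / 4 : ℝ) := by
    rintro ⟨a, b⟩ hz
    have hab : algebraMap K F a ≠ 0 ∨ algebraMap K F b ≠ 0 := by
      have hz0 := ne_of_mem_erase hz
      rw [Ne, Prod.mk_eq_zero, not_and_or] at hz0
      simpa only [ne_eq, map_eq_zero] using hz0
    rw [norm_mul, AddChar.norm_apply, one_mul]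
    exact norm_kloostermanSum_le (AddChar.compAddMonoidHom_trace_ne_one hψ) hab
  have hK : 1 ≤ Fintype.card K ^ 2 := Nat.one_le_pow _ _ Fintype.card_pos
  rw [sq_card_mul_card_filter_trace_eq_sum hψ t s, ← Fintype.sum_prod_type' fun a b => f (a, b),
    ← add_sum_erase _ _ (mem_univ 0), hf0, add_sub_cancel_left]
  calc ‖∑ z ∈ univ.erase (0 : K × K), f z‖ ≤ ∑ z ∈ univ.erase (0 : K × K), ‖f z‖ :=
        norm_sum_le _ _
    _ ≤ #(univ.erase (0 : K × K)) • (2 * (Fintype.card F : ℝ) ^ (3 / 4 : ℝ)) :=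
        sum_le_card_nsmul _ _ _ hf
    _ = _ := by
        rw [card_erase_of_mem (mem_univ _), card_univ, Fintype.card_prod, ← sq, nsmul_eq_mul,
          Nat.cast_sub hK]
        push_cast
        ring

theorem abs_sq_card_mul_card_filter_trace_sub_le (t s : K) :
    |(Fintype.card K : ℝ) ^ 2 *
        #{x : Fˣ | Algebra.trace K F x = t ∧ Algebra.trace K F (x : F)⁻¹ = s} -
      Fintype.card F| ≤ 2 * (Fintype.card K : ℝ) ^ 2 * (Fintype.card F : ℝ) ^ (3 / 4 : ℝ) := by
  have hmain := norm_sq_card_mul_card_filter_trace_sub_card_units_le (F := F) t s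
  have hunits : (Fintype.card Fˣ : ℂ) = Fintype.card F - 1 := by
    rw [Fintype.card_units, Nat.cast_sub Fintype.card_pos, Nat.cast_one]
  have hone : (1 : ℝ) ≤ (Fintype.card F : ℝ) ^ (3 / 4 : ℝ) :=
    Real.one_le_rpow (by exact_mod_cast Fintype.card_pos) (by norm_num)
  rw [← Real.norm_eq_abs, ← Complex.norm_real]
  calc _ = ‖(Fintype.card K : ℂ) ^ 2 *
        #{x : Fˣ | Algebra.trace K F x = t ∧ Algebra.trace K F (x : F)⁻¹ = s} -
          Fintype.card Fˣ - 1‖ := by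
        rw [hunits]; push_cast; ring_nf
    _ ≤ ((Fintype.card K : ℝ) ^ 2 - 1) * (2 * (Fintype.card F : ℝ) ^ (3 / 4 : ℝ)) + 1 := by
        grw [norm_sub_le, hmain, norm_one]
    _ ≤ _ := by nlinarith

theorem abs_card_filter_trace_div_sub_le (t s : K) :
    |(#{x : Fˣ | Algebra.trace K F x = t ∧ Algebra.trace K F (x : F)⁻¹ = s} : ℝ) /
        Fintype.card F - 1 / (Fintype.card K : ℝ) ^ 2| ≤
      2 * (Fintype.card F : ℝ) ^ (-(1 / 4) : ℝ) := by
  have hF : (0 : ℝ) < Fintype.card F := by exact_mod_cast Fintype.card_pos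
  have hden : (0 : ℝ) < (Fintype.card K : ℝ) ^ 2 * Fintype.card F := by positivity
  set N : ℝ := ↑(#{x : Fˣ | Algebra.trace K F x = t ∧ Algebra.trace K F (x : F)⁻¹ = s})
  rw [show N / Fintype.card F - 1 / (Fintype.card K : ℝ) ^ 2 =
      ((Fintype.card K : ℝ) ^ 2 * N - Fintype.card F) / ((Fintype.card K : ℝ) ^ 2 * Fintype.card F)
      by field_simp, abs_div, abs_of_pos hden, div_le_iff₀ hden]
  calc _ ≤ 2 * (Fintype.card K : ℝ) ^ 2 * (Fintype.card F : ℝ) ^ (3 / 4 : ℝ) :=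
        abs_sq_card_mul_card_filter_trace_sub_le t s
    _ = _ := by
        rw [show (3 / 4 : ℝ) = -(1 / 4) + 1 by norm_num, Real.rpow_add_one hF.ne']
        ring

end TraceCotrace

theorem Nat.card_setOf_ne_zero_and {G₀ : Type*} [GroupWithZero G₀] [Fintype G₀ˣ] (P : G₀ → Prop)
    [DecidablePred P] : Nat.card {x : G₀ | x ≠ 0 ∧ P x} = #{u : G₀ˣ | P u} := by
  rw [← Fintype.card_subtype, ← Nat.card_eq_fintype_card]
  exact Nat.card_congr ((Equiv.subtypeSubtypeEquivSubtypeInter _ P).symm.trans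
    (Equiv.subtypeEquiv unitsEquivNeZero fun _ => Iff.rfl).symm)

open Filter in
theorem trace_cotrace_ratio_tendsto_general (p : ℕ) [Fact p.Prime] (s : ZMod p) :
    Tendsto (fun m : ℕ =>
      (Nat.card {x : GaloisField p m | x ≠ 0 ∧
          Algebra.trace (ZMod p) (GaloisField p m) x = 1 ∧
          Algebra.trace (ZMod p) (GaloisField p m) x⁻¹ = s} : ℝ) / (p : ℝ) ^ m)
      atTop (nhds (1 / (p : ℝ) ^ 2)) := by
  classical
  have hbound : ∀ m ≠ 0, ‖(Nat.card {x : GaloisField p m | x ≠ 0 ∧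
      Algebra.trace (ZMod p) (GaloisField p m) x = 1 ∧
      Algebra.trace (ZMod p) (GaloisField p m) x⁻¹ = s} : ℝ) / (p : ℝ) ^ m - 1 / (p : ℝ) ^ 2‖ ≤
      2 * ((p : ℝ) ^ m) ^ (-(1 / 4) : ℝ) := fun m hm => by
    let _ : Fintype (GaloisField p m) := Fintype.ofFinite _
    have hq : Fintype.card (GaloisField p m) = p ^ m := by
      rw [← Nat.card_eq_fintype_card, GaloisField.card p m hm]
    have := abs_card_filter_trace_div_sub_le (K := ZMod p) (F := GaloisField p m) 1 s
    rw [Real.norm_eq_abs, Nat.card_setOf_ne_zero_and]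
    rwa [hq, ZMod.card, Nat.cast_pow] at this
  have hp : (1 : ℝ) < p := by exact_mod_cast (Fact.out : p.Prime).one_lt
  rw [← tendsto_sub_nhds_zero_iff]
  refine squeeze_zero_norm' ((eventually_ne_atTop 0).mono hbound) ?_
  simpa using ((tendsto_rpow_neg_atTop (by norm_num : (0 : ℝ) < 1 / 4)).comp
    (tendsto_pow_atTop_atTop_of_one_lt hp)).const_mul 2

open Filter in
theorem trace_cotrace_ratio_tendsto (p : ℕ) [Fact p.Prime] (s : ZMod p) (hs : s ≠ 0) :
    Tendsto (fun m : ℕ =>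
      (Nat.card {x : GaloisField p m | x ≠ 0 ∧
          Algebra.trace (ZMod p) (GaloisField p m) x = 1 ∧
          Algebra.trace (ZMod p) (GaloisField p m) x⁻¹ = s} : ℝ) / (p : ℝ) ^ m)
      atTop (nhds (1 / (p : ℝ) ^ 2)) :=
  trace_cotrace_ratio_tendsto_general p s
end
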